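/- arXiv:1609.02510 — 2 statements merged into one kernel-verified Lean document; each statement's English description precedes it below -/
import Mathlib

section
/- The operator τ is an involution: τ(τ(X)) = X for all X ∈ ⋀⁴V. -/
open ExteriorAlgebra

/-- The decomposable element `v 0 ∧ v 1 ∧ … ∧ v (n-1)` of the `n`-th exterior power
`⋀[F]^n V`, viewed as a submodule of the exterior algebra. -/
noncomputable def wedge {F : Type*} [Field F] {V : Type*} [AddCommGroup V] [Module F V]
    (n : ℕ) (v : Fin n → V) : ⋀[F]^n V :=
  ⟨ιMulti F n v, ιMulti_range F n (Set.mem_range_self v)⟩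

/-!
In the basis `e_S = e_{s₁} ∧ ⋯ ∧ e_{s₄}` (`S` a 4-subset of `Fin 8`, `s₁ < ⋯ < s₄`) of `⋀⁴V`,
both pairings are monomial: `Ω(e_S, e_T)` vanishes unless `T = Sᶜ`, where it is a sign `ε_S`,
and `Ω_b(e_S, e_T)` vanishes unless `T = S + 4` (mod 8), because `b(e_a, e_c) = 0` unless
`c = a + 4`. Reading off coordinates with `Ω` gives `τ e_S = Ω_b(e_S, e_{S+4}) / ε_{S'} • e_{S'}`
with `S' = (S + 4)ᶜ`, and `S ↦ S'` is an involution. A computation over the 70 subsets shows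
`Ω_b(e_S, e_{S+4}) = 1` and `ε_S ε_{S'} = 1`, so `τ²` fixes every `e_S`.
-/

/-- The zero test lets `decide` skip the minors of zero entries, which makes determinants of
sparse integer matrices cheap to evaluate in the kernel. -/
def laplaceDet {R : Type*} [CommRing R] [DecidableEq R] :
    (n : ℕ) → Matrix (Fin n) (Fin n) R → R
  | 0, _ => 1
  | n + 1, M => ∑ j : Fin (n + 1), (-1) ^ (j : ℕ) *
      if M 0 j = 0 then 0 else M 0 j * laplaceDet n (M.submatrix Fin.succ j.succAbove)

theorem laplaceDet_eq_det {R : Type*} [CommRing R] [DecidableEq R] :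
    ∀ (n : ℕ) (M : Matrix (Fin n) (Fin n) R), laplaceDet n M = M.det
  | 0, M => M.det_fin_zero.symm
  | n + 1, M => by
    rw [M.det_succ_row_zero, laplaceDet]
    refine Finset.sum_congr rfl fun j _ => ?_
    split_ifs with h
    · simp [h]
    · rw [laplaceDet_eq_det, mul_assoc]

theorem det_map_intCast_eq_laplaceDet {R : Type*} [CommRing R] {n : ℕ}
    (M : Matrix (Fin n) (Fin n) ℤ) : (M.map (Int.cast : ℤ → R)).det = (laplaceDet n M : ℤ) := by
  rw [laplaceDet_eq_det, Int.cast_det]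

/-- A kernel-reducible version of `Finset.orderEmbOfFin` (see
`orderEmbOfFin_eq_increasingEnum`), so that `decide` can evaluate it. -/
def increasingEnum {n : ℕ} [NeZero n] (s : Finset (Fin n)) (k : ℕ) (i : Fin k) : Fin n :=
  ((List.finRange n).filter (· ∈ s)).getD i 0

theorem orderEmbOfFin_eq_increasingEnum {n k : ℕ} [NeZero n] (s : Finset (Fin n))
    (h : s.card = k) : ⇑(s.orderEmbOfFin h) = increasingEnum s k := by
  set l := (List.finRange n).filter (· ∈ s)
  have hsorted : l.Pairwise (· < ·) := (List.pairwise_lt_finRange n).filter _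
  have hlen : l.length = k := by
    rw [← h, ← List.toFinset_card_of_nodup hsorted.nodup]
    congr 1
    ext a
    simp [l]
  have hget (i : Fin k) : increasingEnum s k i = l[(i : ℕ)] :=
    List.getD_eq_getElem _ _ (hlen ▸ i.isLt)
  refine (Finset.orderEmbOfFin_unique h (fun i => ?_) (fun i j hij => ?_)).symm
  · rw [hget]
    simpa [l] using List.getElem_mem (l := l) (hlen ▸ i.isLt)
  · rw [hget, hget]
    exact List.pairwise_iff_getElem.mp hsorted _ _ _ _ hij

theorem exists_increasingEnum_eq {n k : ℕ} [NeZero n] (s : Set.powersetCard (Fin n) k)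
    {a : Fin n} (ha : a ∈ s.val) : ∃ i, increasingEnum s.val k i = a := by
  rw [← orderEmbOfFin_eq_increasingEnum s.val (Set.powersetCard.card_eq s), ← Set.mem_range,
    Finset.range_orderEmbOfFin]
  exact ha

theorem increasingEnum_mem {n k : ℕ} [NeZero n] (s : Set.powersetCard (Fin n) k) (i : Fin k) :
    increasingEnum s.val k i ∈ s.val := by
  rw [← orderEmbOfFin_eq_increasingEnum s.val (Set.powersetCard.card_eq s)]
  exact Finset.orderEmbOfFin_mem s.val (Set.powersetCard.card_eq s) i

theorem Fin.comp_append {α β : Type*} {m n : ℕ} (f : α → β) (u : Fin m → α) (v : Fin n → α) :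
    f ∘ Fin.append u v = Fin.append (f ∘ u) (f ∘ v) := by
  ext i
  cases i using Fin.addCases <;> simp

namespace Module.Basis

theorem det_comp_eq_laplaceDet {R M : Type*} [CommRing R] [AddCommGroup M] [Module R M] {n : ℕ}
    (e : Basis (Fin n) R M) (k : Fin n → Fin n) :
    e.det (e ∘ k) = ((laplaceDet n (Matrix.of fun i j => if k j = i then 1 else 0) : ℤ) : R) := by
  rw [← det_map_intCast_eq_laplaceDet, e.det_apply]
  congr 1
  ext i j
  simp [toMatrix_apply, Finsupp.single_apply]

theorem exteriorPower_apply_eq_wedge {F V : Type*} [Field F] [AddCommGroup V] [Module F V]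
    {n k : ℕ} [NeZero n] (e : Basis (Fin n) F V) (s : Set.powersetCard (Fin n) k) :
    e.exteriorPower k s = wedge k (e ∘ increasingEnum s.val k) := by
  rw [exteriorPower.basis_apply, ← orderEmbOfFin_eq_increasingEnum s.val s.prop]
  rfl

theorem apply_apply_of_apply_eq_smul {ι R W : Type*} [CommSemiring R] [AddCommMonoid W]
    [Module R W] (u : Basis ι R W) {τ : W →ₗ[R] W} {k : ι → ι} {c : ι → R}
    (hτ : ∀ s, τ (u s) = c s • u (k s)) (hk : ∀ s, k (k s) = s) (hc : ∀ s, c s * c (k s) = 1)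
    (X : W) : τ (τ X) = X := by
  have : τ ∘ₗ τ = LinearMap.id := u.ext fun s => by
    rw [LinearMap.comp_apply, hτ, map_smul, hτ, hk, smul_smul, hc, one_smul, LinearMap.id_apply]
  exact LinearMap.congr_fun this X

variable {ι R W : Type*} [Fintype ι] [DecidableEq ι]

theorem repr_mul_eq_of_pairing_eq_ite [CommSemiring R] [AddCommMonoid W] [Module R W]
    (u : Basis ι R W) {Ω : W →ₗ[R] W →ₗ[R] R} {g : ι ≃ ι} {η : ι → R}
    (hΩ : ∀ s t, Ω (u s) (u t) = if t = g s then η s else 0) (Z : W) (s : ι) :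
    u.repr Z s * η s = Ω Z (u (g s)) := by
  calc u.repr Z s * η s = ∑ t, u.repr Z t * Ω (u t) (u (g s)) := by
        simp [hΩ, g.injective.eq_iff, eq_comm (a := s)]
    _ = Ω Z (u (g s)) := by
        conv_rhs => rw [← u.sum_repr Z]
        simp only [map_sum, map_smul, LinearMap.sum_apply, LinearMap.smul_apply, smul_eq_mul]

theorem apply_eq_smul_of_pairing_eq_ite [Field R] [AddCommGroup W] [Module R W]
    (u : Basis ι R W) {Ω Ωb : W →ₗ[R] W →ₗ[R] R} {τ : W →ₗ[R] W} {g : ι ≃ ι} {η : ι → R}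
    (hτ : ∀ X Y, Ω (τ X) Y = Ωb X Y) (hΩ : ∀ s t, Ω (u s) (u t) = if t = g s then η s else 0)
    (hη : ∀ s, η s ≠ 0) {h : ι → ι} {β : ι → R}
    (hΩb : ∀ s t, Ωb (u s) (u t) = if t = h s then β s else 0) (s : ι) :
    τ (u s) = (β s / η (g.symm (h s))) • u (g.symm (h s)) := by
  refine u.ext_elem fun t => ?_
  rw [(eq_div_iff (hη t)).mpr (u.repr_mul_eq_of_pairing_eq_ite hΩ _ t), hτ, hΩb]
  by_cases ht : t = g.symm (h s)
  · subst ht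
    simp
  · simp [← g.eq_symm_apply, ht]

end Module.Basis

namespace SymplecticDim8

def compl4 : Set.powersetCard (Fin 8) 4 ≃ Set.powersetCard (Fin 8) 4 :=
  Set.powersetCard.compl (by simp)

def shift (s : Set.powersetCard (Fin 8) 4) : Set.powersetCard (Fin 8) 4 :=
  Set.powersetCard.map 4 (Equiv.addRight 4).toEmbedding s

def dualShift (s : Set.powersetCard (Fin 8) 4) : Set.powersetCard (Fin 8) 4 :=
  compl4.symm (shift s)

theorem dualShift_dualShift (s : Set.powersetCard (Fin 8) 4) : dualShift (dualShift s) = s := by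
  have h : ∀ a : Fin 8, a + -4 + -4 = a := by decide
  ext a
  simp [dualShift, shift, compl4, Set.powersetCard.compl_symm, Finset.mem_map_equiv, h]

def shuffleSign (s : Finset (Fin 8)) : ℤ :=
  laplaceDet 8 (Matrix.of fun i j =>
    if Fin.append (increasingEnum s 4) (increasingEnum sᶜ 4) j = i then 1 else 0)

/-- The Gram matrix of `b` in the basis `x_i = e i`, `y_i = e (i + 4)`. -/
def ω (a c : Fin 8) : ℤ := if c = a + 4 then if a < 4 then 1 else -1 else 0

def symplecticMinor (s : Finset (Fin 8)) : ℤ :=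
  laplaceDet 4 (Matrix.of fun i j =>
    ω (increasingEnum s 4 i) (increasingEnum (s.map (Equiv.addRight 4).toEmbedding) 4 j))

set_option maxRecDepth 10000 in
theorem shuffleSign_mul_shuffleSign_compl_map : ∀ s : Finset (Fin 8), s.card = 4 →
    shuffleSign s * shuffleSign (s.map (Equiv.addRight 4).toEmbedding)ᶜ = 1 := by
  decide

set_option maxRecDepth 10000 in
theorem symplecticMinor_eq_one : ∀ s : Finset (Fin 8), s.card = 4 → symplecticMinor s = 1 := by
  decide

theorem shuffleSign_mul_shuffleSign_dualShift {F : Type*} [Field F]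
    (s : Set.powersetCard (Fin 8) 4) :
    (shuffleSign s.val : F) * shuffleSign (dualShift s).val = 1 := by
  rw [← Int.cast_mul, ← Int.cast_one]
  exact congrArg _ (shuffleSign_mul_shuffleSign_compl_map s.val (Set.powersetCard.card_eq s))

theorem exists_mem_of_ne_compl4 {s t : Set.powersetCard (Fin 8) 4} (h : t ≠ compl4 s) :
    ∃ a ∈ s.val, a ∈ t.val := by
  by_contra! hst
  refine h (Subtype.ext (Finset.eq_of_subset_of_card_le (fun a hat => ?_) ?_))
  · exact Finset.mem_compl.mpr fun has => hst a has hat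
  · simp [compl4, Finset.card_compl]

theorem exists_add_four_notMem_of_ne_shift {s t : Set.powersetCard (Fin 8) 4}
    (h : t ≠ shift s) : ∃ i, increasingEnum s.val 4 i + 4 ∉ t.val := by
  by_contra! hst
  refine h (Subtype.ext (Finset.eq_of_subset_of_card_le (fun a ha => ?_) ?_)).symm
  · obtain ⟨b, hb, rfl⟩ := Finset.mem_map.mp ha
    obtain ⟨i, rfl⟩ := exists_increasingEnum_eq s hb
    exact hst i
  · simp [shift]

variable {F V : Type*} [Field F] [AddCommGroup V] [Module F V] (e : Module.Basis (Fin 8) F V)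

theorem apply_basis_eq_ω {B : V →ₗ[F] V →ₗ[F] F} (hBalt : ∀ v : V, B v v = 0)
    (hxy : ∀ i j : Fin 4,
      B (e (Fin.castAdd 4 i)) (e (Fin.natAdd 4 j)) = if i = j then 1 else 0)
    (hxx : ∀ i j : Fin 4, B (e (Fin.castAdd 4 i)) (e (Fin.castAdd 4 j)) = 0)
    (hyy : ∀ i j : Fin 4, B (e (Fin.natAdd 4 i)) (e (Fin.natAdd 4 j)) = 0) (a c : Fin 8) :
    B (e a) (e c) = ω a c := by
  have hω : ∀ i j : Fin 4, ω (Fin.castAdd 4 i) (Fin.castAdd 4 j) = 0 ∧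
      ω (Fin.castAdd 4 i) (Fin.natAdd 4 j) = (if i = j then 1 else 0) ∧
      ω (Fin.natAdd 4 i) (Fin.castAdd 4 j) = (if j = i then -1 else 0) ∧
      ω (Fin.natAdd 4 i) (Fin.natAdd 4 j) = 0 := by
    decide
  induction a using Fin.addCases (m := 4) (n := 4) with
  | left i =>
    induction c using Fin.addCases (m := 4) (n := 4) with
    | left j => rw [hxx, (hω i j).1, Int.cast_zero]
    | right j => rw [hxy, (hω i j).2.1]; split_ifs <;> simp
  | right i =>
    induction c using Fin.addCases (m := 4) (n := 4) with
    | left j =>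
      rw [← LinearMap.IsAlt.neg hBalt, hxy, (hω i j).2.2.1]; split_ifs <;> simp
    | right j => rw [hyy, (hω i j).2.2.2, Int.cast_zero]

theorem detPairing_basis {Ω : ⋀[F]^4 V →ₗ[F] ⋀[F]^4 V →ₗ[F] F}
    (hΩ : ∀ v w : Fin 4 → V, Ω (wedge 4 v) (wedge 4 w) = e.det (Fin.append v w))
    (s t : Set.powersetCard (Fin 8) 4) :
    Ω (e.exteriorPower 4 s) (e.exteriorPower 4 t) =
      if t = compl4 s then (shuffleSign s.val : F) else 0 := by
  rw [e.exteriorPower_apply_eq_wedge, e.exteriorPower_apply_eq_wedge, hΩ]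
  split_ifs with hts
  · subst hts
    rw [← Fin.comp_append, e.det_comp_eq_laplaceDet]
    rfl
  · obtain ⟨a, has, hat⟩ := exists_mem_of_ne_compl4 hts
    obtain ⟨i, rfl⟩ := exists_increasingEnum_eq s has
    obtain ⟨j, hj⟩ := exists_increasingEnum_eq t hat
    refine e.det.map_eq_zero_of_not_injective _ fun hinj => ?_
    exact (Fin.append_injective_iff.mp hinj).2.2 i j (by simp [hj])

theorem symplecticPairing_basis {B : V →ₗ[F] V →ₗ[F] F} (hB : ∀ a c, B (e a) (e c) = ω a c)
    {Ωb : ⋀[F]^4 V →ₗ[F] ⋀[F]^4 V →ₗ[F] F}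
    (hΩb : ∀ v w : Fin 4 → V,
      Ωb (wedge 4 v) (wedge 4 w) = Matrix.det (Matrix.of fun i j => B (v i) (w j)))
    (s t : Set.powersetCard (Fin 8) 4) :
    Ωb (e.exteriorPower 4 s) (e.exteriorPower 4 t) = if t = shift s then 1 else 0 := by
  rw [e.exteriorPower_apply_eq_wedge, e.exteriorPower_apply_eq_wedge, hΩb]
  simp only [Function.comp_apply, hB]
  split_ifs with hts
  · subst hts
    calc _ = ((symplecticMinor s.val : ℤ) : F) := det_map_intCast_eq_laplaceDet _
      _ = 1 := by rw [symplecticMinor_eq_one s.val (Set.powersetCard.card_eq s), Int.cast_one]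
  · obtain ⟨i, hi⟩ := exists_add_four_notMem_of_ne_shift hts
    refine Matrix.det_eq_zero_of_row_eq_zero i fun j => ?_
    have hj : increasingEnum t.val 4 j ≠ increasingEnum s.val 4 i + 4 :=
      fun hj => hi (hj ▸ increasingEnum_mem t j)
    simp [ω, hj]

end SymplecticDim8

open SymplecticDim8

theorem stmt14_general {F V : Type*} [Field F] [AddCommGroup V] [Module F V]
    (e : Module.Basis (Fin 8) F V)
    (B : V →ₗ[F] V →ₗ[F] F) (hBalt : ∀ v : V, B v v = 0)
    (hxy : ∀ i j : Fin 4,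
      B (e (Fin.castAdd 4 i)) (e (Fin.natAdd 4 j)) = if i = j then 1 else 0)
    (hxx : ∀ i j : Fin 4, B (e (Fin.castAdd 4 i)) (e (Fin.castAdd 4 j)) = 0)
    (hyy : ∀ i j : Fin 4, B (e (Fin.natAdd 4 i)) (e (Fin.natAdd 4 j)) = 0)
    (Ω : (⋀[F]^4 V) →ₗ[F] (⋀[F]^4 V) →ₗ[F] F)
    (hΩ : ∀ v w : Fin 4 → V, Ω (wedge 4 v) (wedge 4 w) = e.det (Fin.append v w))
    (Ωb : (⋀[F]^4 V) →ₗ[F] (⋀[F]^4 V) →ₗ[F] F)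
    (hΩb : ∀ v w : Fin 4 → V,
      Ωb (wedge 4 v) (wedge 4 w) = Matrix.det (Matrix.of fun i j => B (v i) (w j)))
    (τ : (⋀[F]^4 V) →ₗ[F] (⋀[F]^4 V))
    (hτ : ∀ X Y : ⋀[F]^4 V, Ω (τ X) Y = Ωb X Y) :
    ∀ X : ⋀[F]^4 V, τ (τ X) = X := by
  have hτ_basis : ∀ s, τ (e.exteriorPower 4 s) =
      (1 / (shuffleSign (dualShift s).val : F)) • e.exteriorPower 4 (dualShift s) :=
    (e.exteriorPower 4).apply_eq_smul_of_pairing_eq_ite hτ (detPairing_basis e hΩ)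
      (fun s => left_ne_zero_of_mul_eq_one (shuffleSign_mul_shuffleSign_dualShift s))
      (symplecticPairing_basis e (apply_basis_eq_ω e hBalt hxy hxx hyy) hΩb)
  refine (e.exteriorPower 4).apply_apply_of_apply_eq_smul hτ_basis dualShift_dualShift fun s => ?_
  rw [dualShift_dualShift, div_mul_div_comm, one_mul, mul_comm,
    shuffleSign_mul_shuffleSign_dualShift, div_one]

/-- The operator `τ` is an involution. -/
theorem stmt14 {F V : Type*} [Field F] [CharZero F] [AddCommGroup V] [Module F V]
    (e : Module.Basis (Fin 8) F V)
    (B : V →ₗ[F] V →ₗ[F] F) (hBalt : ∀ v : V, B v v = 0)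
    (hxy : ∀ i j : Fin 4,
      B (e (Fin.castAdd 4 i)) (e (Fin.natAdd 4 j)) = if i = j then 1 else 0)
    (hxx : ∀ i j : Fin 4, B (e (Fin.castAdd 4 i)) (e (Fin.castAdd 4 j)) = 0)
    (hyy : ∀ i j : Fin 4, B (e (Fin.natAdd 4 i)) (e (Fin.natAdd 4 j)) = 0)
    (Ω : (⋀[F]^4 V) →ₗ[F] (⋀[F]^4 V) →ₗ[F] F)
    (hΩ : ∀ v w : Fin 4 → V, Ω (wedge 4 v) (wedge 4 w) = e.det (Fin.append v w))
    (Ωb : (⋀[F]^4 V) →ₗ[F] (⋀[F]^4 V) →ₗ[F] F)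
    (hΩb : ∀ v w : Fin 4 → V,
      Ωb (wedge 4 v) (wedge 4 w) = Matrix.det (Matrix.of fun i j => B (v i) (w j)))
    (τ : (⋀[F]^4 V) →ₗ[F] (⋀[F]^4 V))
    (hτ : ∀ X Y : ⋀[F]^4 V, Ω (τ X) Y = Ωb X Y) :
    ∀ X : ⋀[F]^4 V, τ (τ X) = X :=
  stmt14_general e B hBalt hxy hxx hyy Ω hΩ Ωb hΩb τ hτ
end

section
/- Let f be an invertible F-linear endomorphism of V with det(f) = 1. Then the following two conditions together hold — (a) f∘d∘f⁻¹ = d for every d ∈ End_F(V) with trace 0, and (b) ⋀⁴f = id on ⋀⁴V — if and only if f = c·id_V for some c ∈ F with c⁴ = 1. -/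
/-! An endomorphism commuting with every trace-zero endomorphism commutes in particular with the
off-diagonal matrix units `E_ij`, hence is a scalar `c`. Then `⋀⁴f` is multiplication by `c⁴` on
`⋀⁴V`, which is nonzero because `4 ≤ dim V`, so `⋀⁴f = id` exactly when `c⁴ = 1`. -/

open ExteriorAlgebra

namespace LinearMap

variable {R V : Type*} [CommRing R] [AddCommGroup V] [Module R V]

theorem exists_eq_smul_one_of_forall_trace_eq_zero_commute [Module.Free R V] [Module.Finite R V]
    {f : Module.End R V} (hf : ∀ d, trace R V d = 0 → Commute f d) :
    ∃ c : R, f = c • 1 := by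
  classical
  let b := Module.Free.chooseBasis R V
  let e := toMatrixAlgEquiv b
  obtain ⟨c, hc⟩ : e f ∈ Set.range (Matrix.scalar _) := by
    refine Matrix.mem_range_scalar_of_commute_single fun i j hij => ?_
    have htr : trace R V (e.symm (Matrix.single i j 1)) = 0 := by
      rw [trace_eq_matrix_trace R b]
      change Matrix.trace (e _) = 0
      rw [e.apply_symm_apply]
      exact Matrix.trace_single_eq_of_ne i j 1 hij
    simpa using ((hf _ htr).map e).symm
  refine ⟨c, e.injective ?_⟩
  rw [← hc, map_smul, map_one, Matrix.smul_one_eq_diagonal]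
  rfl

end LinearMap

section
variable {F V : Type*} [Field F] [AddCommGroup V] [Module F V] {n : ℕ}

theorem wedge_eq_ιMulti (v : Fin n → V) : wedge n v = exteriorPower.ιMulti F n v := rfl

theorem wedge_smul (c : F) (v : Fin n → V) :
    wedge n (fun i => c • v i) = c ^ n • (wedge n v : ⋀[F]^n V) := by
  simpa [wedge_eq_ιMulti] using (exteriorPower.ιMulti F n (M := V)).map_smul_univ (fun _ => c) v

theorem eq_pow_smul_id_of_apply_wedge {c : F} {g : ⋀[F]^n V →ₗ[F] ⋀[F]^n V}
    (hg : ∀ v, g (wedge n v) = wedge n fun i => c • v i) : g = c ^ n • LinearMap.id := by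
  refine exteriorPower.linearMap_ext (AlternatingMap.ext fun v => ?_)
  simpa [← wedge_eq_ιMulti, wedge_smul] using hg v

theorem exteriorPower.nontrivial_of_le_finrank [FiniteDimensional F V] (hn : n ≤ Module.finrank F V) :
    Nontrivial (⋀[F]^n V) :=
  Module.nontrivial_of_finrank_pos <| by
    rw [exteriorPower.finrank_eq]; exact Nat.choose_pos hn

end

theorem stmt19_general {F V : Type*} [Field F]
    [AddCommGroup V] [Module F V] [FiniteDimensional F V]
    (hdim : Module.finrank F V = 8)
    (f : (Module.End F V)ˣ)
    (F4f : (⋀[F]^4 V) →ₗ[F] (⋀[F]^4 V))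
    (hF4f : ∀ v : Fin 4 → V,
      F4f (wedge 4 v) = wedge 4 fun i => (f : Module.End F V) (v i)) :
    ((∀ d : Module.End F V, LinearMap.trace F V d = 0 →
        (f : Module.End F V) * d * (↑f⁻¹ : Module.End F V) = d) ∧
      F4f = LinearMap.id) ↔
    ∃ c : F, c ^ 4 = 1 ∧ (f : Module.End F V) = c • (1 : Module.End F V) := by
  have hF4f_of_eq {c : F} (hc : (f : Module.End F V) = c • 1) : F4f = c ^ 4 • LinearMap.id :=
    eq_pow_smul_id_of_apply_wedge fun v => by simp [hF4f, hc]
  constructor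
  · rintro ⟨hconj, hF4⟩
    obtain ⟨c, hc⟩ := LinearMap.exists_eq_smul_one_of_forall_trace_eq_zero_commute fun d hd =>
      (Units.mul_inv_eq_iff_eq_mul f).mp (hconj d hd)
    have : Nontrivial (⋀[F]^4 V) := exteriorPower.nontrivial_of_le_finrank (by omega)
    obtain ⟨x, hx⟩ := exists_ne (0 : ⋀[F]^4 V)
    refine ⟨c, smul_left_injective F hx ?_, hc⟩
    simpa [hF4] using (LinearMap.congr_fun (hF4f_of_eq hc) x).symm
  · rintro ⟨c, hc4, hc⟩
    refine ⟨fun d _ => ?_, by rw [hF4f_of_eq hc, hc4, one_smul]⟩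
    rw [Units.mul_inv_eq_iff_eq_mul, hc, smul_mul_assoc, one_mul, mul_smul_comm, mul_one]

/-- Let `f` be an invertible endomorphism of an 8-dimensional space `V` with `det(f) = 1`.
Then `f` centralizes all trace-zero endomorphisms and `⋀⁴f = id` if and only if
`f = c·id_V` for some `c ∈ F` with `c⁴ = 1`. -/
theorem stmt19 {F V : Type*} [Field F] [CharZero F]
    (hroot : ∃ ζ : F, IsPrimitiveRoot ζ 4)
    [AddCommGroup V] [Module F V] [FiniteDimensional F V]
    (hdim : Module.finrank F V = 8)
    (f : (Module.End F V)ˣ) (hdet : LinearMap.det (f : Module.End F V) = 1)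
    (F4f : (⋀[F]^4 V) →ₗ[F] (⋀[F]^4 V))
    (hF4f : ∀ v : Fin 4 → V,
      F4f (wedge 4 v) = wedge 4 fun i => (f : Module.End F V) (v i)) :
    ((∀ d : Module.End F V, LinearMap.trace F V d = 0 →
        (f : Module.End F V) * d * (↑f⁻¹ : Module.End F V) = d) ∧
      F4f = LinearMap.id) ↔
    ∃ c : F, c ^ 4 = 1 ∧ (f : Module.End F V) = c • (1 : Module.End F V) :=
  stmt19_general hdim f F4f hF4f
end
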